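/- If A is symmetric positive definite and B is symmetric positive semidefinite with strictly positive diagonal entries, then the Hadamard product A ⊙ B is symmetric positive definite. -/

import Mathlib

/-!
A positive definite `A` dominates `ε • 1` for some `ε > 0` (any positive lower bound of its
spectrum). Splitting `A ⊙ B = (A - ε • 1) ⊙ B + ε • diagonal B.diag`, the first summand is
positive semidefinite by the Schur product theorem and the second is positive definite because
the diagonal of `B` is positive.
-/

open Matrix
open scoped MatrixOrder ComplexOrder

theorem Matrix.PosDef.exists_pos_posSemidef_sub_smul_one {ι 𝕜 : Type*} [Fintype ι]
    [DecidableEq ι] [RCLike 𝕜] {A : Matrix ι ι 𝕜} (hA : A.PosDef) :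
    ∃ ε : ℝ, 0 < ε ∧ (A - ε • (1 : Matrix ι ι 𝕜)).PosSemidef := by
  cases isEmpty_or_nonempty ι
  · exact ⟨1, one_pos, Subsingleton.elim 0 (A - _) ▸ .zero⟩
  open scoped Matrix.Norms.L2Operator in
  obtain ⟨ε, hε, hle⟩ := (CFC.exists_pos_algebraMap_le_iff hA.isHermitian.isSelfAdjoint).2
    fun x hx => hA.isStrictlyPositive.spectrum_pos hx
  exact ⟨ε, hε, le_iff.1 (by simpa [Algebra.algebraMap_eq_smul_one] using hle)⟩

theorem Matrix.PosDef.hadamard_of_posSemidef {ι 𝕜 : Type*} [Fintype ι] [RCLike 𝕜]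
    {A B : Matrix ι ι 𝕜} (hA : A.PosDef) (hB : B.PosSemidef) (hBdiag : ∀ i, 0 < B i i) :
    (A ⊙ B).PosDef := by
  classical
  obtain ⟨ε, hε, hAε⟩ := hA.exists_pos_posSemidef_sub_smul_one
  have hsplit : A ⊙ B = (A - ε • 1) ⊙ B + ε • diagonal B.diag := by
    rw [← one_hadamard, ← smul_hadamard, ← add_hadamard, sub_add_cancel]
  rw [hsplit]
  exact .posSemidef_add (hAε.hadamard hB) ((posDef_diagonal_iff.2 hBdiag).smul hε)

/-- If `A` is symmetric positive definite and `B` is symmetric positive semidefinite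
with strictly positive diagonal entries, then the Hadamard product `A ⊙ B` is
symmetric positive definite. -/
theorem hadamard_posDef_of_posDef_posSemidef {n : ℕ}
    (A B : Matrix (Fin n) (Fin n) ℝ)
    (hA : A.PosDef) (hB : B.PosSemidef) (hBdiag : ∀ i, 0 < B i i) :
    (Matrix.hadamard A B).PosDef :=
  hA.hadamard_of_posSemidef hB hBdiag
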